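/- Let H be a complex Hilbert space, K a fundamental symmetry on H (K = K*, K∘K = 1), ρ(x) := K∘x∘K, O^{†K} := K∘O*∘K, and [T, a]_ρ := T∘a − ρ(a)∘T. Let J be an antiunitary operator on H and ε₃, s ∈ {1, −1} with J∘K = ε₃•(K∘J). Let D' : H → H be a linear map with J∘D' = s•(D'∘J). Let u be a unitary bounded operator on H and set û := J∘u∘J⁻¹. Assume the zero-order conditions u∘û = û∘u and u∘û* = û*∘u, and the twisted first-order condition [D', u^{†K}]_ρ ∘ û^{†K} = ρ(û^{†K}) ∘ [D', u^{†K}]_ρ. Then, setting U := u∘û and A := u∘[D', u^{†K}]_ρ, one has U∘D'∘U^{†K} = D' + A + s•(J∘A∘J⁻¹). -/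
import Mathlib


open ContinuousLinearMap

/-- Conjugation of a bounded operator `O` by an antiunitary `J`:
the bounded linear operator `J ∘ O ∘ J⁻¹ : x ↦ J (O (J⁻¹ x))`. -/
noncomputable def conjJ {H : Type*} [NormedAddCommGroup H] [InnerProductSpace ℂ H]
    (J : H ≃ₗᵢ⋆[ℂ] H) (O : H →L[ℂ] H) : H →L[ℂ] H where
  toLinearMap :=
    { toFun := fun x => J (O (J.symm x))
      map_add' := by intro x y; simp
      map_smul' := by intro c x; simp [map_smulₛₗ] }
  cont := J.continuous.comp (O.continuous.comp J.symm.continuous)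

/-- The `K`-adjoint `O^{†K} = K ∘ O* ∘ K`. -/
noncomputable def kAdj {H : Type*} [NormedAddCommGroup H] [InnerProductSpace ℂ H]
    [CompleteSpace H] (K O : H →L[ℂ] H) : H →L[ℂ] H :=
  K ∘L adjoint O ∘L K

/-- The twisted commutator `[T, a]_ρ = T ∘ a − ρ(a) ∘ T` with `ρ(a) = K ∘ a ∘ K`, for a linear
map `T : H → H` (possibly unbounded) and a bounded operator `a`. -/
def tcomm {H : Type*} [NormedAddCommGroup H] [InnerProductSpace ℂ H]
    (K : H →L[ℂ] H) (T : H →ₗ[ℂ] H) (a : H →L[ℂ] H) : H →ₗ[ℂ] H :=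
  T ∘ₗ (a : H →ₗ[ℂ] H) - ((K ∘L a ∘L K : H →L[ℂ] H) : H →ₗ[ℂ] H) ∘ₗ T

section Aux
variable {H : Type*} [NormedAddCommGroup H] [InnerProductSpace ℂ H]

local notation "⟪" x ", " y "⟫" => @inner ℂ _ _ x y

lemma conj_inner_J' (J : H ≃ₗᵢ⋆[ℂ] H) (x y : H) : ⟪J x, J y⟫ = ⟪y, x⟫ := by
  rw [inner_eq_sum_norm_sq_div_four, inner_eq_sum_norm_sq_div_four]
  have hI : (RCLike.I : ℂ) = Complex.I := rfl
  have h1 : ‖(J x : H) + J y‖ = ‖y + x‖ := by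
    rw [← map_add, J.norm_map, add_comm]
  have h2 : ‖(J x : H) - J y‖ = ‖y - x‖ := by
    rw [← map_sub, J.norm_map, norm_sub_rev]
  have e1 : (Complex.I : ℂ) • (J y : H) = J ((-Complex.I) • y) := by
    rw [LinearIsometryEquiv.map_smulₛₗ]; simp
  have h3 : ‖(J x : H) - Complex.I • J y‖ = ‖y - Complex.I • x‖ := by
    rw [e1, ← map_sub, J.norm_map]
    have e2 : x - (-Complex.I) • y = Complex.I • (y - Complex.I • x) := by
      simp [smul_sub, smul_smul, Complex.I_mul_I]; module
    rw [e2, norm_smul]; simp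
  have h4 : ‖(J x : H) + Complex.I • J y‖ = ‖y + Complex.I • x‖ := by
    rw [e1, ← map_add, J.norm_map]
    have e2 : x + (-Complex.I) • y = (-Complex.I) • (y + Complex.I • x) := by
      simp [smul_add, smul_smul, Complex.I_mul_I]; module
    rw [e2, norm_smul]; simp
  rw [hI, h1, h2, h3, h4]

lemma conjJ_apply' (J : H ≃ₗᵢ⋆[ℂ] H) (O : H →L[ℂ] H) (x : H) :
    conjJ J O x = J (O (J.symm x)) := rfl

variable [CompleteSpace H]

lemma adjoint_conjJ' (J : H ≃ₗᵢ⋆[ℂ] H) (O : H →L[ℂ] H) :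
    adjoint (conjJ J O) = conjJ J (adjoint O) := by
  symm
  rw [eq_adjoint_iff]
  intro x y
  rw [conjJ_apply', conjJ_apply']
  calc ⟪J (adjoint O (J.symm x)), y⟫
      = ⟪J (adjoint O (J.symm x)), J (J.symm y)⟫ := by rw [J.apply_symm_apply]
    _ = ⟪J.symm y, adjoint O (J.symm x)⟫ := conj_inner_J' J _ _
    _ = ⟪O (J.symm y), J.symm x⟫ := by rw [adjoint_inner_right]
    _ = ⟪J (J.symm x), J (O (J.symm y))⟫ := (conj_inner_J' J _ _).symm
    _ = ⟪x, J (O (J.symm y))⟫ := by rw [J.apply_symm_apply]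

end Aux

/-- With `K` a fundamental symmetry, `ρ(x) = K∘x∘K`, `J` antiunitary with
`J∘K = ε₃ • (K∘J)`, `D'` a Dirac-type operator with `J∘D' = s • (D'∘J)`, `u` unitary,
`û = J∘u∘J⁻¹`, the zero-order conditions `u∘û = û∘u`, `u∘û* = û*∘u`, and the twisted
first-order condition `[D', u^{†K}]_ρ ∘ û^{†K} = ρ(û^{†K}) ∘ [D', u^{†K}]_ρ`, one has, with
`U := u∘û` and `A := u ∘ [D', u^{†K}]_ρ`:  `U ∘ D' ∘ U^{†K} = D' + A + s • (J∘A∘J⁻¹)`. -/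
theorem twisted_fluctuation_form
    {H : Type*} [NormedAddCommGroup H] [InnerProductSpace ℂ H] [CompleteSpace H]
    (K : H →L[ℂ] H) (hKsa : adjoint K = K) (hK2 : K ∘L K = 1)
    (J : H ≃ₗᵢ⋆[ℂ] H) (ε₃ s : ℝ)
    (hε₃ : ε₃ = 1 ∨ ε₃ = -1) (hs : s = 1 ∨ s = -1)
    (hJK : ∀ x : H, J (K x) = ε₃ • K (J x))
    (D' : H →ₗ[ℂ] H) (hJD : ∀ x : H, J (D' x) = s • D' (J x))
    (u : H →L[ℂ] H) (hu1 : u ∘L adjoint u = 1) (hu2 : adjoint u ∘L u = 1)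
    (hz1 : u ∘L conjJ J u = conjJ J u ∘L u)
    (hz2 : u ∘L adjoint (conjJ J u) = adjoint (conjJ J u) ∘L u)
    (hfo : tcomm K D' (kAdj K u) ∘ₗ ((kAdj K (conjJ J u) : H →L[ℂ] H) : H →ₗ[ℂ] H) =
      ((K ∘L kAdj K (conjJ J u) ∘L K : H →L[ℂ] H) : H →ₗ[ℂ] H) ∘ₗ tcomm K D' (kAdj K u)) :
    ∀ x : H,
      (u ∘L conjJ J u) (D' ((kAdj K (u ∘L conjJ J u)) x)) =
        D' x + ((u : H →ₗ[ℂ] H) ∘ₗ tcomm K D' (kAdj K u)) x +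
          s • J (((u : H →ₗ[ℂ] H) ∘ₗ tcomm K D' (kAdj K u)) (J.symm x)) := by
  -- scalar facts
  have hε2 : ε₃ * ε₃ = 1 := by rcases hε₃ with rfl | rfl <;> norm_num
  have hs2 : s * s = 1 := by rcases hs with rfl | rfl <;> norm_num
  -- pointwise basic facts
  have hK1 : ∀ z : H, K (K z) = z := by
    intro z; have := DFunLike.congr_fun hK2 z; simpa using this
  have huu : ∀ z : H, u (adjoint u z) = z := by
    intro z; have := DFunLike.congr_fun hu1 z; simpa using this
  have huu' : ∀ z : H, adjoint u (u z) = z := by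
    intro z; have := DFunLike.congr_fun hu2 z; simpa using this
  set v : H →L[ℂ] H := conjJ J u with hv
  have hva : adjoint v = conjJ J (adjoint u) := adjoint_conjJ' J u
  have hvv : ∀ z : H, v (adjoint v z) = z := by
    intro z; rw [hva, hv]; simp [conjJ_apply', huu]
  have hvv' : ∀ z : H, adjoint v (v z) = z := by
    intro z; rw [hva, hv]; simp [conjJ_apply', huu']
  -- commutation facts
  have hsw_vu : ∀ z : H, v (adjoint u z) = adjoint u (v z) := by
    have h := congrArg adjoint hz2
    rw [adjoint_comp, adjoint_comp, adjoint_adjoint] at h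
    intro z; exact DFunLike.congr_fun h z
  have hsw_ss : ∀ z : H, adjoint v (adjoint u z) = adjoint u (adjoint v z) := by
    have h := congrArg adjoint hz1
    rw [adjoint_comp, adjoint_comp] at h
    intro z; exact DFunLike.congr_fun h z
  -- J-conjugation facts
  have hJu : ∀ z : H, J (u z) = v (J z) := by
    intro z; rw [hv, conjJ_apply']; simp
  have hJus : ∀ z : H, J (adjoint u z) = adjoint v (J z) := by
    intro z; rw [hva, conjJ_apply']; simp
  -- real smul through maps
  have hJr : ∀ (r : ℝ) (w : H), J (r • w) = r • J w := by
    intro r w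
    have : r • w = (r : ℂ) • w := by simp
    rw [this, LinearIsometryEquiv.map_smulₛₗ]; simp
  -- first order condition, pointwise and rearranged
  have hfo'' : ∀ z : H,
      D' (K (adjoint u (adjoint v (K z)))) =
        adjoint u (D' (K (adjoint v (K z)))) +
          (adjoint v (D' (K (adjoint u (K z)))) - adjoint v (adjoint u (D' z))) := by
    intro z
    have h := DFunLike.congr_fun hfo z
    simp only [tcomm, kAdj, LinearMap.sub_apply, LinearMap.comp_apply,
      ContinuousLinearMap.coe_coe, ContinuousLinearMap.comp_apply, hK1, map_sub] at h
    rw [← sub_eq_iff_eq_add'] ; rw [← h]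
  -- J conjugate of u-dagger argument
  have hJKs : ∀ z : H, J (K (J.symm z)) = ε₃ • K z := by
    intro z
    rw [hJK (J.symm z), J.apply_symm_apply]
  have hJud : ∀ z : H, J (K (adjoint u (K (J.symm z)))) = K (adjoint v (K z)) := by
    intro z
    rw [hJK, hJus, hJKs, map_smul_of_tower, map_smul_of_tower, smul_smul, hε2, one_smul]
  intro x
  -- unfold the goal
  simp only [ContinuousLinearMap.comp_apply, LinearMap.comp_apply,
    ContinuousLinearMap.coe_coe, tcomm, LinearMap.sub_apply, kAdj, adjoint_comp, hK1]
  rw [hsw_ss (K x), hfo'' x]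
  simp only [map_add, map_sub, smul_sub, hsw_vu, huu, hvv, hJu, hJus, hJD, hJud, hJr,
    map_smul_of_tower, smul_smul, hs2, one_smul, LinearIsometryEquiv.apply_symm_apply]
  abel
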